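/- arXiv:2505.17891 — 11 statements merged into one kernel-verified Lean document; each statement's English description precedes it below -/
import Mathlib

section
/- In the threshold model with n processes and at most f Byzantine faults where n ≥ 3f + 1, if each of n - f processes reports a set of n - f values in round 2, and a process collects the reports of n - f of these processes in round 3, then there exists a common core of at least n - f values contained in the union of any n - f round-2 reports. -/
/-- Threshold gather common-core counting lemma: for any family `A i` of subsets of `[n]`
each of size ≥ `n - f`, and round-1 sets `S j` each of size ≥ `n - f`, with
`T i = ⋃_{j ∈ A i} S j`, there exists `j*` such that `S j* ⊆ T i` for at least `f + 1`
indices `i`. -/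
theorem stmt1 (n f : ℕ) (hn : n ≥ 3 * f + 1)
    (S A : Fin n → Finset (Fin n))
    (hS : ∀ j, n - f ≤ (S j).card)
    (hA : ∀ i, n - f ≤ (A i).card)
    (T : Fin n → Finset (Fin n))
    (hT : ∀ i, T i = (A i).biUnion S) :
    ∃ j : Fin n, f + 1 ≤ (Finset.univ.filter (fun i => S j ⊆ T i)).card := by
  by_contra h
  push_neg at h
  -- each j belongs to A i for at most f indices i
  have hmem : ∀ j : Fin n, (Finset.univ.filter (fun i => j ∈ A i)).card ≤ f := by
    intro j
    have hsub : (Finset.univ.filter (fun i => j ∈ A i)) ⊆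
        (Finset.univ.filter (fun i => S j ⊆ T i)) := by
      intro i hi
      simp only [Finset.mem_filter] at hi ⊢
      exact ⟨hi.1, by rw [hT]; exact Finset.subset_biUnion_of_mem S hi.2⟩
    have := Finset.card_le_card hsub
    have h2 := h j
    omega
  -- double counting
  have hdc : ∑ i : Fin n, (A i).card =
      ∑ j : Fin n, (Finset.univ.filter (fun i => j ∈ A i)).card := by
    simp only [Finset.card_eq_sum_ones]
    rw [Finset.sum_comm' (s := Finset.univ) (t := fun i => A i)
      (t' := Finset.univ) (s' := fun j => Finset.univ.filter (fun i => j ∈ A i))]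
    intro i j
    simp
  have hlow : n * (n - f) ≤ ∑ i : Fin n, (A i).card := by
    calc n * (n - f) = ∑ _i : Fin n, (n - f) := by simp [Finset.sum_const, Finset.card_univ]
    _ ≤ ∑ i : Fin n, (A i).card := Finset.sum_le_sum (fun i _ => hA i)
  have hup : ∑ j : Fin n, (Finset.univ.filter (fun i => j ∈ A i)).card ≤ n * f := by
    calc ∑ j : Fin n, (Finset.univ.filter (fun i => j ∈ A i)).card
        ≤ ∑ _j : Fin n, f := Finset.sum_le_sum (fun j _ => hmem j)
    _ = n * f := by simp [Finset.sum_const, Finset.card_univ, Nat.mul_comm]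
  have : n * (n - f) ≤ n * f := by omega
  have hnf : n - f ≥ 2 * f + 1 := by omega
  have := Nat.mul_le_mul_left n hnf
  nlinarith [Nat.mul_le_mul_left n hnf]
end

section
/- If an asymmetric fail-prone system 𝔽 admits an asymmetric Byzantine quorum system ℚ, then 𝔽 satisfies the B³-condition: for all i, j, all F_i ∈ ℱ_i, F_j ∈ ℱ_j, and F_ij ∈ ℱ_i* ∩ ℱ_j*, P is not contained in F_i ∪ F_j ∪ F_ij. -/
/-- `star 𝒻` is the collection of all subsets of members of `𝒻`. -/
def star {P : Type*} (𝒻 : Set (Set P)) : Set (Set P) := {A | ∃ B ∈ 𝒻, A ⊆ B}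

/-- If an asymmetric fail-prone system `ℱ` admits an asymmetric Byzantine quorum system
`𝒬` (satisfying Consistency and Availability), then `ℱ` satisfies the B³-condition. -/
theorem stmt2 {P : Type*} {n : ℕ} (ℱ 𝒬 : Fin n → Set (Set P))
    (hCons : ∀ i j, ∀ Qi ∈ 𝒬 i, ∀ Qj ∈ 𝒬 j, ∀ Fij ∈ star (ℱ i) ∩ star (ℱ j),
      ¬ (Qi ∩ Qj ⊆ Fij))
    (hAvail : ∀ i, ∀ Fi ∈ ℱ i, ∃ Qi ∈ 𝒬 i, Fi ∩ Qi = ∅) :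
    ∀ i j, ∀ Fi ∈ ℱ i, ∀ Fj ∈ ℱ j, ∀ Fij ∈ star (ℱ i) ∩ star (ℱ j),
      ¬ (Set.univ ⊆ Fi ∪ Fj ∪ Fij) := by
  intro i j Fi hFi Fj hFj Fij hFij hsub
  obtain ⟨Qi, hQi, hdi⟩ := hAvail i Fi hFi
  obtain ⟨Qj, hQj, hdj⟩ := hAvail j Fj hFj
  apply hCons i j Qi hQi Qj hQj Fij hFij
  intro x hx
  rcases hsub (Set.mem_univ x) with (h | h) | h
  · exact absurd (Set.eq_empty_iff_forall_notMem.mp hdi x) (by simp [h, hx.1])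
  · exact absurd (Set.eq_empty_iff_forall_notMem.mp hdj x) (by simp [h, hx.2])
  · exact h
end

section
/- If an asymmetric fail-prone system 𝔽 satisfies the B³-condition, then the canonical quorum system ℚ defined by 𝒬_i = { P \ F_i : F_i ∈ ℱ_i } is an asymmetric Byzantine quorum system for 𝔽. -/
/-- If an asymmetric fail-prone system `ℱ` satisfies the B³-condition, then the
canonical quorum system `𝒬 i = { P \ Fᵢ : Fᵢ ∈ ℱ i }` is an asymmetric Byzantine quorum
system for `ℱ` (it satisfies Consistency and Availability). -/
theorem stmt3 {P : Type*} {n : ℕ} (ℱ : Fin n → Set (Set P))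
    (hB3 : ∀ i j, ∀ Fi ∈ ℱ i, ∀ Fj ∈ ℱ j, ∀ Fij ∈ star (ℱ i) ∩ star (ℱ j),
      ¬ (Set.univ ⊆ Fi ∪ Fj ∪ Fij))
    (𝒬 : Fin n → Set (Set P))
    (h𝒬 : ∀ i, 𝒬 i = {Q | ∃ Fi ∈ ℱ i, Q = Set.univ \ Fi}) :
    (∀ i j, ∀ Qi ∈ 𝒬 i, ∀ Qj ∈ 𝒬 j, ∀ Fij ∈ star (ℱ i) ∩ star (ℱ j),
      ¬ (Qi ∩ Qj ⊆ Fij)) ∧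
    (∀ i, ∀ Fi ∈ ℱ i, ∃ Qi ∈ 𝒬 i, Fi ∩ Qi = ∅) := by
  constructor
  · intro i j Qi hQi Qj hQj Fij hFij hsub
    rw [h𝒬 i] at hQi
    rw [h𝒬 j] at hQj
    obtain ⟨Fi, hFi, rfl⟩ := hQi
    obtain ⟨Fj, hFj, rfl⟩ := hQj
    apply hB3 i j Fi hFi Fj hFj Fij hFij
    intro x _
    by_cases hxi : x ∈ Fi
    · exact Or.inl (Or.inl hxi)
    by_cases hxj : x ∈ Fj
    · exact Or.inl (Or.inr hxj)
    · exact Or.inr (hsub ⟨⟨trivial, hxi⟩, ⟨trivial, hxj⟩⟩)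
  · intro i Fi hFi
    refine ⟨Set.univ \ Fi, ?_, ?_⟩
    · rw [h𝒬 i]; exact ⟨Fi, hFi, rfl⟩
    · ext x; simp
end

section
/- In any execution with a nonempty guild, every quorum of a wise process contains at least one wise process. -/
/-- In any execution with a nonempty guild, every quorum of a wise process contains at
least one wise process. -/
theorem stmt4 {P : Type*} (ℱ 𝒬 : P → Set (Set P)) (F : Set P)
    (hCons : ∀ i j : P, ∀ Qi ∈ 𝒬 i, ∀ Qj ∈ 𝒬 j, ∀ Fij ∈ star (ℱ i) ∩ star (ℱ j),
      ¬ (Qi ∩ Qj ⊆ Fij))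
    (hAvail : ∀ i : P, ∀ Fi ∈ ℱ i, ∃ Qi ∈ 𝒬 i, Fi ∩ Qi = ∅)
    (G : Set P) (hGne : G.Nonempty)
    (hGwise : ∀ p ∈ G, F ∈ star (ℱ p))
    (hGclosed : ∀ p ∈ G, ∃ Q ∈ 𝒬 p, Q ⊆ G)
    (i : P) (hwise : F ∈ star (ℱ i)) (Q : Set P) (hQ : Q ∈ 𝒬 i) :
    ∃ j ∈ Q, F ∈ star (ℱ j) := by
  obtain ⟨p, hp⟩ := hGne
  obtain ⟨Qp, hQp, hQpG⟩ := hGclosed p hp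
  have h := hCons i p Q hQ Qp hQp F ⟨hwise, hGwise p hp⟩
  rw [Set.not_subset] at h
  obtain ⟨j, ⟨hjQ, hjQp⟩, -⟩ := h
  exact ⟨j, hjQ, hGwise j (hQpG hjQp)⟩
end

section
/- If p_i and p_j are both wise processes and Q_i is a quorum for p_i, then K = Q_i \ F intersects every quorum of p_j; that is, K contains a kernel for p_j consisting only of correct processes. -/
/-- If `p_i` and `p_j` are both wise and `Q_i` is a quorum for `p_i`, then `Q_i \ F`
intersects every quorum of `p_j`, i.e., it is a kernel for `p_j` of correct processes. -/
theorem stmt5 {P : Type*} (ℱ 𝒬 : P → Set (Set P)) (F : Set P)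
    (hCons : ∀ i j : P, ∀ Qi ∈ 𝒬 i, ∀ Qj ∈ 𝒬 j, ∀ Fij ∈ star (ℱ i) ∩ star (ℱ j),
      ¬ (Qi ∩ Qj ⊆ Fij))
    (i j : P) (hi : F ∈ star (ℱ i)) (hj : F ∈ star (ℱ j))
    (Qi : Set P) (hQi : Qi ∈ 𝒬 i) :
    ∀ Qj ∈ 𝒬 j, ((Qi \ F) ∩ Qj).Nonempty := by
  intro Qj hQj
  have h := hCons i j Qi hQi Qj hQj F ⟨hi, hj⟩
  rw [Set.not_subset] at h
  obtain ⟨x, hx, hxF⟩ := h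
  exact ⟨x, ⟨hx.1, hxF⟩, hx.2⟩
end

section
/- There exists an asymmetric fail-prone system on 30 processes satisfying the B³-condition such that the three-round quorum-replacement gather computation yields no common core: explicitly, with the quorums of Figure 1 and S_i = Q_i, T_i = ⋃_{j ∈ Q_i} S_j, U_i = ⋃_{j ∈ Q_i} T_j, there is no index k such that S_k ⊆ U_i for all i. -/
/-- The 30-process quorum system of Figure 1 (0-indexed): each process has exactly one
quorum; its fail-prone set is the complement of its quorum. -/
def Q : Fin 30 → Finset (Fin 30) := ![
  {0,1,2,3,4,15}, {0,5,6,7,8,16}, {0,1,2,3,4,17}, {0,5,6,7,8,18}, {1,5,9,10,11,19},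
  {3,7,10,12,14,20}, {3,7,10,12,14,21}, {4,8,11,13,14,22}, {4,8,11,13,14,23},
  {3,7,10,12,14,24}, {0,5,6,7,8,25}, {1,5,9,10,11,26}, {2,6,9,12,13,27},
  {2,6,9,12,13,28}, {4,8,11,13,14,29}, {0,1,2,3,4,15}, {0,1,2,3,4,15},
  {0,1,2,3,4,15}, {0,1,2,3,4,15}, {0,5,6,7,8,26}, {0,5,6,7,8,26}, {0,5,6,7,8,19},
  {1,5,9,10,11,29}, {1,5,9,10,11,29}, {0,5,6,7,8,21}, {0,1,2,3,4,15},
  {0,5,6,7,8,26}, {0,1,2,3,4,15}, {0,1,2,3,4,28}, {1,5,9,10,11,29}]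

/-- Round-2 sets: `T i = ⋃_{j ∈ Q i} S j` with `S j = Q j`. -/
def T (i : Fin 30) : Finset (Fin 30) := (Q i).biUnion Q

/-- Round-3 sets: `U i = ⋃_{j ∈ Q i} T j`. -/
def U (i : Fin 30) : Finset (Fin 30) := (Q i).biUnion T

set_option maxRecDepth 10000 in
lemma aux1 : ∀ i j : Fin 30, (Q i ∩ Q j).Nonempty := by decide

set_option maxRecDepth 100000 in
lemma aux2 : ¬ ∃ k : Fin 30, ∀ i : Fin 30, Q k ⊆ U i := by decide

/-- The system of Figure 1 satisfies the B³-condition (with fail-prone sets the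
complements of the quorums), yet the three-round quorum-replacement gather yields no
common core: there is no `k` with `S k = Q k ⊆ U i` for all `i`. -/
theorem stmt7 :
    (∀ i j : Fin 30, ∀ Fij : Finset (Fin 30),
        Fij ⊆ (Finset.univ \ Q i) ∩ (Finset.univ \ Q j) →
        ¬ (Finset.univ ⊆ (Finset.univ \ Q i) ∪ (Finset.univ \ Q j) ∪ Fij)) ∧
    ¬ ∃ k : Fin 30, ∀ i : Fin 30, Q k ⊆ U i := by
  refine ⟨?_, aux2⟩
  intro i j Fij hF hcov
  obtain ⟨x, hx⟩ := aux1 i j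
  simp only [Finset.mem_inter] at hx
  have h := hcov (Finset.mem_univ x)
  simp only [Finset.mem_union, Finset.mem_sdiff, Finset.mem_univ, true_and] at h
  rcases h with (h|h)|h
  · exact h hx.1
  · exact h hx.2
  · have := hF h
    simp only [Finset.mem_inter, Finset.mem_sdiff, Finset.mem_univ, true_and] at this
    exact this.1 hx.1
end

section
/- In an execution of the asymmetric gather protocol with a nonempty guild, if no process in the maximal guild ever sends a DistributeT message, then every process in the maximal guild eventually sends a Ready message, hence a Confirm message, hence a DistributeT message — a contradiction; therefore at least one process in the maximal guild sends a DistributeT message. -/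
/-- In an execution of the asymmetric gather protocol with a nonempty guild, at least one
process in the maximal guild sends a `DistributeT` message: if none did, all guild
members would keep acknowledging, hence send `Ready`, hence `Confirm`, hence
`DistributeT` — a contradiction. -/
theorem stmt10 {P : Type*} (ℱ 𝒬 : P → Set (Set P)) (F : Set P)
    (Gmax : Set P) (hGne : Gmax.Nonempty)
    (hGwise : ∀ p ∈ Gmax, F ∈ star (ℱ p))
    (hGclosed : ∀ p ∈ Gmax, ∃ Q ∈ 𝒬 p, Q ⊆ Gmax)
    (ack : P → P → Prop)  -- `ack j i`: `j` acknowledges `i`'s `DistributeS`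
    (sendsReady sendsConfirm sendsDT : P → Prop)
    (hAck : (∀ j ∈ Gmax, ¬ sendsDT j) → ∀ i ∈ Gmax, ∀ j ∈ Gmax, ack j i)
    (hReady : ∀ i ∈ Gmax, (∃ Q ∈ 𝒬 i, ∀ j ∈ Q, ack j i) → sendsReady i)
    (hConfirm : ∀ i ∈ Gmax, (∃ Q ∈ 𝒬 i, ∀ j ∈ Q, sendsReady j) → sendsConfirm i)
    (hDT : ∀ i ∈ Gmax, (∃ Q ∈ 𝒬 i, ∀ j ∈ Q, sendsConfirm j) → sendsDT i) :
    ∃ i ∈ Gmax, sendsDT i := by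
  by_contra h
  push_neg at h
  have hack := hAck h
  have hready : ∀ i ∈ Gmax, sendsReady i := fun i hi => by
    obtain ⟨Q, hQ, hQsub⟩ := hGclosed i hi
    exact hReady i hi ⟨Q, hQ, fun j hj => hack i hi j (hQsub hj)⟩
  have hconf : ∀ i ∈ Gmax, sendsConfirm i := fun i hi => by
    obtain ⟨Q, hQ, hQsub⟩ := hGclosed i hi
    exact hConfirm i hi ⟨Q, hQ, fun j hj => hready j (hQsub hj)⟩
  obtain ⟨i, hi⟩ := hGne
  obtain ⟨Q, hQ, hQsub⟩ := hGclosed i hi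
  exact h i hi (hDT i hi ⟨Q, hQ, fun j hj => hconf j (hQsub hj)⟩)
end

section
/- In the asymmetric gather protocol, if some process in the maximal guild sends a Confirm message, then some process in the maximal guild has received Ready messages from an entire quorum of its own. -/
/-- In the asymmetric gather protocol, if some process in the maximal guild sends a
`Confirm` message (at some time `t`), then some process in the maximal guild has
received `Ready` messages from an entire quorum of its own. -/
theorem stmt11 {P : Type*} (𝒬 : P → Set (Set P)) (Gmax : Set P)
    (hGclosed : ∀ p ∈ Gmax, ∃ Q ∈ 𝒬 p, Q ⊆ Gmax)
    (readyFrom : P → P → Prop)  -- `readyFrom i j`: `i` received a Ready message from `j`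
    (confirmAt : P → ℕ → Prop)  -- `confirmAt i t`: `i` sends Confirm at time `t`
    (hRule : ∀ i ∈ Gmax, ∀ t, confirmAt i t →
      (∃ Q ∈ 𝒬 i, ∀ j ∈ Q, readyFrom i j) ∨
      (∃ K : Set P, (∀ Q ∈ 𝒬 i, (K ∩ Q).Nonempty) ∧ ∀ j ∈ K, ∃ t' < t, confirmAt j t'))
    (hEx : ∃ i ∈ Gmax, ∃ t, confirmAt i t) :
    ∃ i ∈ Gmax, ∃ Q ∈ 𝒬 i, ∀ j ∈ Q, readyFrom i j := by
  obtain ⟨i, hi, t, ht⟩ := hEx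
  induction t using Nat.strong_induction_on generalizing i with
  | _ t ih =>
    rcases hRule i hi t ht with h | ⟨K, hK, hconf⟩
    · exact ⟨i, hi, h⟩
    · obtain ⟨Q, hQ, hQG⟩ := hGclosed i hi
      obtain ⟨j, hjK, hjQ⟩ := hK Q hQ
      obtain ⟨t', ht', hconf'⟩ := hconf j hjK
      exact ih t' ht' j (hQG hjQ) hconf'
end

section
/- In the asymmetric gather protocol, if one process p_i in the maximal guild sends DistributeT (having received Confirms from a quorum Q_i), then every process p_j in the maximal guild eventually sends DistributeT: the correct processes Q_i \ F form a kernel for p_j, causing p_j to send Confirm, and then all guild members receive Confirms from a quorum. -/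
/-- If one process `p_i` in the maximal guild sends `DistributeT` (having received
`Confirm`s from a whole quorum `Q_i`), then every process `p_j` in the maximal guild
eventually sends `DistributeT`: `Q_i \ F` is a kernel of correct confirmers for `p_j`,
so `p_j` sends `Confirm`, and then all guild members receive `Confirm`s from a quorum. -/
theorem stmt12 {P : Type*} (ℱ 𝒬 : P → Set (Set P)) (F : Set P)
    (hCons : ∀ i j : P, ∀ Qi ∈ 𝒬 i, ∀ Qj ∈ 𝒬 j, ∀ Fij ∈ star (ℱ i) ∩ star (ℱ j),
      ¬ (Qi ∩ Qj ⊆ Fij))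
    (Gmax : Set P)
    (hGcorrect : ∀ p ∈ Gmax, p ∉ F)
    (hGwise : ∀ p ∈ Gmax, F ∈ star (ℱ p))
    (hGclosed : ∀ p ∈ Gmax, ∃ Q ∈ 𝒬 p, Q ⊆ Gmax)
    (sendsConfirm sendsDT : P → Prop)
    (i : P) (hi : i ∈ Gmax) (Qi : Set P) (hQi : Qi ∈ 𝒬 i)
    (hConf : ∀ k ∈ Qi, sendsConfirm k) (hiDT : sendsDT i)
    (hKernelRule : ∀ j ∈ Gmax,
      (∃ K : Set P, (∀ Q ∈ 𝒬 j, (K ∩ Q).Nonempty) ∧ ∀ k ∈ K, sendsConfirm k ∧ k ∉ F) →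
      sendsConfirm j)
    (hDTRule : ∀ j ∈ Gmax, (∃ Q ∈ 𝒬 j, ∀ k ∈ Q, sendsConfirm k) → sendsDT j) :
    ∀ j ∈ Gmax, sendsDT j := by
  have hC : ∀ j ∈ Gmax, sendsConfirm j := by
    intro j hj
    apply hKernelRule j hj
    refine ⟨Qi \ F, ?_, ?_⟩
    · intro Q hQ
      have := hCons i j Qi hQi Q hQ F ⟨hGwise i hi, hGwise j hj⟩
      rw [Set.not_subset] at this
      obtain ⟨x, ⟨hx1, hx2⟩, hx3⟩ := this
      exact ⟨x, ⟨hx1, hx3⟩, hx2⟩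
    · intro k hk; exact ⟨hConf k hk.1, hk.2⟩
  intro j hj
  obtain ⟨Q, hQ, hQG⟩ := hGclosed j hj
  exact hDTRule j hj ⟨Q, hQ, fun k hk => hC k (hQG hk)⟩
end

section
/- Every kernel of a wise process contains at least one correct process. -/
/-- Every kernel of a wise process contains at least one correct process. -/
theorem stmt18 {P : Type*} (ℱ 𝒬 : P → Set (Set P)) (F : Set P)
    (hAvail : ∀ i : P, ∀ Fi ∈ ℱ i, ∃ Qi ∈ 𝒬 i, Fi ∩ Qi = ∅)
    (i : P) (hwise : F ∈ star (ℱ i))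
    (K : Set P) (hK : ∀ Q ∈ 𝒬 i, (K ∩ Q).Nonempty) :
    ¬ K ⊆ F := by
  intro hKF
  obtain ⟨B, hB, hFB⟩ := hwise
  obtain ⟨Q, hQ, hdisj⟩ := hAvail i B hB
  obtain ⟨x, hxK, hxQ⟩ := hK Q hQ
  have : x ∈ B ∩ Q := ⟨hFB (hKF hxK), hxQ⟩
  rw [hdisj] at this
  exact this
end

section
/- If G is a guild for (𝔽, ℚ) and Q is any quorum of any process p_j (not necessarily in G), then Q ∩ G ≠ ∅, provided p_j is wise; i.e., quorums of wise processes always intersect the maximal guild. -/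
/-- If `G` is a guild and `p_j` is wise, then any quorum `Q_j` of `p_j` intersects `G`
in a correct process. -/
theorem stmt19 {P : Type*} (ℱ 𝒬 : P → Set (Set P)) (F : Set P)
    (hCons : ∀ i j : P, ∀ Qi ∈ 𝒬 i, ∀ Qj ∈ 𝒬 j, ∀ Fij ∈ star (ℱ i) ∩ star (ℱ j),
      ¬ (Qi ∩ Qj ⊆ Fij))
    (G : Set P) (hGne : G.Nonempty)
    (hGwise : ∀ p ∈ G, F ∈ star (ℱ p))
    (hGclosed : ∀ p ∈ G, ∃ Q ∈ 𝒬 p, Q ⊆ G)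
    (j : P) (hj : F ∈ star (ℱ j)) (Qj : Set P) (hQj : Qj ∈ 𝒬 j) :
    ∃ x ∈ Qj ∩ G, x ∉ F := by
  obtain ⟨i, hi⟩ := hGne
  obtain ⟨Qi, hQi, hQiG⟩ := hGclosed i hi
  have h := hCons i j Qi hQi Qj hQj F ⟨hGwise i hi, hj⟩
  rw [Set.not_subset] at h
  obtain ⟨x, ⟨hxQi, hxQj⟩, hxF⟩ := h
  exact ⟨x, ⟨hxQj, hQiG hxQi⟩, hxF⟩
end
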